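/- arXiv:2103.00989 — 3 statements merged into one kernel-verified Lean document; each statement's English description precedes it below -/
import Mathlib

section
/- Let c₁ < ... < c_q be positive integers (q ≥ 0) and λ₁, ..., λ_q nonzero integers, and define f = ∑_{j=1}^q λ_j I_{c_j} : ℤ → ℂ. Then the fundamental (smallest positive) period of f is lcm(c₁, ..., c_q) (interpreted as 1 when q = 0). -/
/-- The `ℂ`-valued indicator of divisibility: `1` if `a ∣ x` and `0` otherwise. -/
def I (a : ℕ) (x : ℤ) : ℂ := if (a : ℤ) ∣ x then 1 else 0

/-!
For `L = lcm c` and `ζ` a primitive `c_m`-th root of unity, the Fourier coefficient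
`∑_{x < L} f x ζ^x` only sees the terms `λ_j I_{c_j}` with `c_m ∣ c_j`; for the largest modulus
`c_m` this leaves `λ_m L / c_m ≠ 0`. Shifting the summation by a period `ω` multiplies the
coefficient by `ζ^ω`, so `ζ^ω = 1`, i.e. `c_m ∣ ω`. Then `λ_m I_{c_m}` is `ω`-periodic, hence so is
the remaining sum, and by induction every `c_j`, and so `lcm c`, divides `ω`.
-/

open Finset Function

lemma periodic_I_of_dvd {a n : ℕ} (h : a ∣ n) : Periodic (I a) n := fun x => by
  simp only [I, dvd_add_left (Int.natCast_dvd_natCast.mpr h)]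

lemma periodic_sum_I_lcm {ι : Type*} (s : Finset ι) (c : ι → ℕ) (w : ι → ℂ) :
    Periodic (fun x => ∑ j ∈ s, w j * I (c j) x) (s.lcm c : ℕ) := by
  refine fun x => sum_congr rfl fun j hj => ?_
  rw [periodic_I_of_dvd (dvd_lcm hj)]

lemma Function.Periodic.sum_range_add_one {M : Type*} [AddCommMonoid M] {G : ℕ → M} {L : ℕ}
    (hG : Periodic G L) : ∑ x ∈ range L, G (x + 1) = ∑ x ∈ range L, G x := by
  cases L with
  | zero => rfl
  | succ L => rw [sum_range_succ, hG.eq, sum_range_succ']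

lemma Function.Periodic.sum_range_add {M : Type*} [AddCommMonoid M] {G : ℕ → M} {L : ℕ}
    (hG : Periodic G L) (s : ℕ) : ∑ x ∈ range L, G (x + s) = ∑ x ∈ range L, G x := by
  induction s generalizing G with
  | zero => rfl
  | succ s ih =>
    have hG' : Periodic (fun x => G (x + 1)) L := fun x => by
      simpa only [add_right_comm] using hG (x + 1)
    simpa only [add_assoc, add_comm 1] using (ih hG').trans hG.sum_range_add_one

lemma sum_range_mul_ite_dvd {M : Type*} [AddCommMonoid M] (g : ℕ → M) {a : ℕ} (ha : 0 < a)
    (n : ℕ) : ∑ x ∈ range (a * n), (if a ∣ x then g x else 0) = ∑ y ∈ range n, g (a * y) := by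
  have hfilter : {x ∈ range (a * n) | a ∣ x} =
      (range n).map ⟨(a * ·), mul_right_injective₀ ha.ne'⟩ := by
    ext x
    simp only [mem_filter, mem_range, mem_map, Embedding.coeFn_mk]
    constructor
    · rintro ⟨hx, y, rfl⟩
      exact ⟨y, lt_of_mul_lt_mul_left hx ha.le, rfl⟩
    · rintro ⟨y, hy, rfl⟩
      exact ⟨Nat.mul_lt_mul_of_pos_left hy ha, dvd_mul_right a y⟩
  rw [← sum_filter, hfilter, sum_map]
  rfl

lemma sum_range_I_mul_pow {ζ : ℂ} {a L : ℕ} (ha : 0 < a) (haL : a ∣ L) (hζ : ζ ^ L = 1) :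
    ∑ x ∈ range L, I a x * ζ ^ x = if ζ ^ a = 1 then ((L / a : ℕ) : ℂ) else 0 := by
  obtain ⟨n, rfl⟩ := haL
  have hsum : ∑ x ∈ range (a * n), I a x * ζ ^ x = ∑ y ∈ range n, (ζ ^ a) ^ y := by
    simp only [I, Int.natCast_dvd_natCast, ite_mul, one_mul, zero_mul, ← pow_mul]
    exact sum_range_mul_ite_dvd (ζ ^ ·) ha n
  rw [hsum, Nat.mul_div_cancel_left n ha]
  split_ifs with hζa
  · simp [hζa]
  · rw [geom_sum_eq hζa, ← pow_mul, hζ, sub_self, zero_div]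

lemma pow_eq_one_of_periodic {F : ℤ → ℂ} {L ω : ℕ} {ζ : ℂ} (hL : Periodic F L)
    (hω : Periodic F ω) (hζ : ζ ^ L = 1) (hS : ∑ x ∈ range L, F x * ζ ^ x ≠ 0) :
    ζ ^ ω = 1 := by
  have hG : Periodic (fun x : ℕ => F x * ζ ^ x) L := fun x => by
    simp only [Nat.cast_add, hL x, pow_add, hζ, mul_one]
  have hshift := hG.sum_range_add ω
  simp only [Nat.cast_add, hω _, pow_add, ← mul_assoc, ← sum_mul] at hshift
  exact (mul_eq_left₀ hS).mp hshift

lemma dvd_of_periodic_sum_I_of_forall_lt {ι : Type*} {s : Finset ι} {c : ι → ℕ} {w : ι → ℂ}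
    {m : ι} (hm : m ∈ s) (hmax : ∀ j ∈ s, j ≠ m → c j < c m) (hcpos : ∀ j ∈ s, 0 < c j)
    (hwm : w m ≠ 0) {ω : ℕ} (hω : Periodic (fun x => ∑ j ∈ s, w j * I (c j) x) ω) :
    c m ∣ ω := by
  set L := s.lcm c
  have hcL : ∀ j ∈ s, c j ∣ L := fun j hj => dvd_lcm hj
  obtain ⟨ζ, hζ⟩ : ∃ ζ : ℂ, IsPrimitiveRoot ζ (c m) :=
    ⟨_, Complex.isPrimitiveRoot_exp _ (hcpos m hm).ne'⟩
  have hζL : ζ ^ L = 1 := (hζ.pow_eq_one_iff_dvd L).mpr (hcL m hm)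
  have hcoeff : ∑ x ∈ range L, (∑ j ∈ s, w j * I (c j) x) * ζ ^ x = w m * (L / c m : ℕ) := by
    simp only [sum_mul, mul_assoc]
    rw [sum_comm]
    simp only [← mul_sum]
    rw [sum_eq_single_of_mem m hm fun j hj hjm => ?_,
      sum_range_I_mul_pow (hcpos m hm) (hcL m hm) hζL, if_pos hζ.pow_eq_one]
    have hζj : ζ ^ c j ≠ 1 := fun h =>
      Nat.not_dvd_of_pos_of_lt (hcpos j hj) (hmax j hj hjm) ((hζ.pow_eq_one_iff_dvd _).mp h)
    rw [sum_range_I_mul_pow (hcpos j hj) (hcL j hj) hζL, if_neg hζj, mul_zero]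
  have hL : L ≠ 0 := lcm_ne_zero_iff.mpr fun j hj => (hcpos j hj).ne'
  have hcoeff_ne : w m * (L / c m : ℕ) ≠ 0 := mul_ne_zero hwm <| Nat.cast_ne_zero.mpr <|
    (Nat.div_ne_zero_iff_of_dvd (hcL m hm)).mpr ⟨hL, (hcpos m hm).ne'⟩
  exact (hζ.pow_eq_one_iff_dvd ω).mp
    (pow_eq_one_of_periodic (periodic_sum_I_lcm s c w) hω hζL (hcoeff ▸ hcoeff_ne))

theorem dvd_of_periodic_sum_I {ι : Type*} (s : Finset ι) {c : ι → ℕ} (hc : Injective c)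
    (hcpos : ∀ j, 0 < c j) {w : ι → ℂ} (hw : ∀ j, w j ≠ 0) {ω : ℕ}
    (hω : Periodic (fun x => ∑ j ∈ s, w j * I (c j) x) ω) : ∀ j ∈ s, c j ∣ ω := by
  classical
  induction s using Finset.induction_on_max_value c with
  | empty => simp
  | insert m t hmt hmax ih =>
    have hm : c m ∣ ω := by
      refine dvd_of_periodic_sum_I_of_forall_lt (mem_insert_self m t) (fun j hj hjm => ?_)
        (fun j _ => hcpos j) (hw m) hω
      exact (hmax j (mem_of_mem_insert_of_ne hj hjm)).lt_of_ne (hc.ne hjm)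
    have ht : Periodic (fun x => ∑ j ∈ t, w j * I (c j) x) ω := fun x => by
      have h := hω x
      simp only [sum_insert hmt, periodic_I_of_dvd hm x] at h
      exact add_left_cancel h
    intro j hj
    rcases mem_insert.mp hj with rfl | hj
    exacts [hm, ih ht j hj]

theorem fundamental_period_eq_lcm (q : ℕ)
    (c : Fin q → ℕ) (hc : StrictMono c) (hcpos : ∀ j, 0 < c j)
    (lam : Fin q → ℤ) (hlam : ∀ j, lam j ≠ 0) :
    IsLeast {ω : ℕ | 0 < ω ∧
        ∀ x : ℤ, (∑ j, (lam j : ℂ) * I (c j) (x + ω)) = ∑ j, (lam j : ℂ) * I (c j) x}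
      (Finset.univ.lcm c) := by
  refine ⟨⟨?_, periodic_sum_I_lcm univ c _⟩, fun ω ⟨hω, hper⟩ => ?_⟩
  · exact Nat.pos_of_ne_zero (lcm_ne_zero_iff.mpr fun j _ => (hcpos j).ne')
  · have hdvd := dvd_of_periodic_sum_I univ hc.injective hcpos
      (fun j => Int.cast_ne_zero.mpr (hlam j)) hper
    exact Nat.le_of_dvd hω (lcm_dvd hdvd)
end

section
/- Let g : {roots of unity in ℂ} → ℂ vanish outside a finite set, and define f : ℤ → ℂ by f(x) = ∑_ζ g(ζ) ζ^x. Then f is periodic, and its fundamental period equals lcm{ order(ζ) : g(ζ) ≠ 0 } (interpreted as 1 if g is identically zero). -/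
/-!
The characters `n ↦ ζ ^ n` for distinct `ζ` are linearly independent (pair the coefficients with
a Lagrange basis polynomial). Since `f (x + ω) - f x = ∑ g ζ (ζ ^ ω - 1) ζ ^ x`, the integer `ω` is a
period of `f` exactly when `ζ ^ ω = 1` for every `ζ` in the support of `g`, i.e. when `ω` is a
multiple of the lcm of their orders.
-/

open Finset Polynomial

section

variable {K : Type*} [Field K]

theorem sum_mul_eval_eq_zero_of_forall_sum_mul_pow_eq_zero {s : Finset K} {c : K → K}
    (h : ∀ n : ℕ, ∑ x ∈ s, c x * x ^ n = 0) (p : K[X]) :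
    ∑ x ∈ s, c x * p.eval x = 0 := by
  induction p using Polynomial.induction_on' with
  | add p q hp hq => simp only [eval_add, mul_add, sum_add_distrib, hp, hq, add_zero]
  | monomial n a =>
    simp only [eval_monomial, mul_left_comm _ a, ← mul_sum, h, mul_zero]

theorem eq_zero_of_forall_sum_mul_pow_eq_zero {s : Finset K} {c : K → K}
    (h : ∀ n : ℕ, ∑ x ∈ s, c x * x ^ n = 0) {y : K} (hy : y ∈ s) : c y = 0 := by
  classical
  have hbasis := sum_mul_eval_eq_zero_of_forall_sum_mul_pow_eq_zero h (Lagrange.basis s id y)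
  have hself : (Lagrange.basis s id y).eval y = 1 := Lagrange.eval_basis_self (Set.injOn_id _) hy
  rw [sum_eq_single_of_mem y hy, hself, mul_one] at hbasis
  · exact hbasis
  · exact fun x hx hxy ↦ mul_eq_zero_of_right _ (Lagrange.eval_basis_of_ne (v := id) hxy.symm hx)

theorem periodic_sum_mul_zpow_iff {s : Finset K} {c : K → K} (hs : ∀ x ∈ s, x ≠ 0)
    (hc : ∀ x ∈ s, c x ≠ 0) (ω : ℤ) :
    Function.Periodic (fun n : ℤ ↦ ∑ x ∈ s, c x * x ^ n) ω ↔ ∀ x ∈ s, x ^ ω = 1 := by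
  have hshift (n : ℤ) : ∑ x ∈ s, c x * x ^ (n + ω) - ∑ x ∈ s, c x * x ^ n =
      ∑ x ∈ s, c x * (x ^ ω - 1) * x ^ n := by
    rw [← sum_sub_distrib]
    refine sum_congr rfl fun x hx ↦ ?_
    rw [zpow_add₀ (hs x hx)]
    ring
  refine ⟨fun hper x hx ↦ ?_, fun hroot n ↦ ?_⟩
  · have hcoeff := eq_zero_of_forall_sum_mul_pow_eq_zero (c := fun x ↦ c x * (x ^ ω - 1))
      (fun n ↦ by simpa only [zpow_natCast, hper n, sub_self] using (hshift n).symm) hx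
    exact sub_eq_zero.1 ((mul_eq_zero.1 hcoeff).resolve_left (hc x hx))
  · rw [← sub_eq_zero]
    exact (hshift n).trans (sum_eq_zero fun x hx ↦ by rw [hroot x hx, sub_self, mul_zero, zero_mul])

end

theorem Finset.lcm_orderOf_dvd_iff {M : Type*} [Monoid M] {s : Finset M} {n : ℕ} :
    s.lcm orderOf ∣ n ↔ ∀ x ∈ s, x ^ n = 1 := by
  simp only [lcm_dvd_iff, orderOf_dvd_iff_pow_eq_one]

theorem Finset.lcm_orderOf_pos {M : Type*} [Monoid M] {s : Finset M}
    (hs : ∀ x ∈ s, IsOfFinOrder x) : 0 < s.lcm orderOf :=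
  Nat.pos_of_ne_zero fun h ↦ by
    obtain ⟨x, hx, hx0⟩ := lcm_eq_zero_iff.1 h
    exact (hs x hx).orderOf_pos.ne' hx0

theorem fundamental_period_of_root_of_unity_sum (g : ℂ → ℂ)
    (hfin : (Function.support g).Finite)
    (hroot : ∀ ζ : ℂ, g ζ ≠ 0 → ∃ n : ℕ, 0 < n ∧ ζ ^ n = 1)
    (f : ℤ → ℂ) (hf : ∀ x : ℤ, f x = ∑ ζ ∈ hfin.toFinset, g ζ * ζ ^ x) :
    IsLeast {ω : ℕ | 0 < ω ∧ ∀ x : ℤ, f (x + ω) = f x}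
      (hfin.toFinset.lcm orderOf) := by
  set s := hfin.toFinset
  have hg : ∀ ζ ∈ s, g ζ ≠ 0 := fun ζ hζ ↦ hfin.mem_toFinset.1 hζ
  have hfinOrder : ∀ ζ ∈ s, IsOfFinOrder ζ := fun ζ hζ ↦
    isOfFinOrder_iff_pow_eq_one.2 (hroot ζ (hg ζ hζ))
  have hperiod (ω : ℕ) : Function.Periodic f ω ↔ s.lcm orderOf ∣ ω := by
    rw [funext hf, periodic_sum_mul_zpow_iff (fun ζ hζ ↦ (hfinOrder ζ hζ).isUnit.ne_zero) hg,
      lcm_orderOf_dvd_iff]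
    simp only [zpow_natCast]
  exact ⟨⟨lcm_orderOf_pos hfinOrder, (hperiod _).2 dvd_rfl⟩,
    fun ω ⟨hω, hper⟩ ↦ Nat.le_of_dvd hω ((hperiod ω).1 hper)⟩
end

section
/- Let f₁, ..., f_m : ℤ → ℂ be given by f_j(x) = ∑_{ζ} g_j(ζ) ζ^x where each sum is over the primitive ω_j-th roots of unity ζ in ℂ, the ω_j ≥ 1 are distinct integers, and each f_j is not identically zero. Then the fundamental period of f = f₁ + ... + f_m is lcm(ω₁, ..., ω_m). -/
/-!
Distinct elements `ζ` give linearly independent characters `x ↦ ζ ^ x` (Dedekind), and primitive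
roots of distinct orders are distinct, so a vanishing sum of Ramanujan components has vanishing
coefficients. If `T` is a period of `f`, applying this to `f (x + T) - f x` gives
`g_j(ζ) (ζ ^ T - 1) = 0` for all `j` and `ζ`; choosing `ζ` with `g_j(ζ) ≠ 0` yields `ζ ^ T = 1`,
i.e. `ω_j ∣ T`. Conversely every common multiple of the `ω_j` is a period, so the periods are
exactly the positive multiples of `lcm ω_j`.
-/

open Finset Function

section Dedekind

variable {K ι : Type*} [CommRing K] [IsDomain K]

theorem eq_zero_of_forall_sum_mul_pow_eq_zero_s18 {s : Finset ι} {v : ι → K} (hv : Set.InjOn v s)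
    {c : ι → K} (h : ∀ n : ℕ, ∑ i ∈ s, c i * v i ^ n = 0) : ∀ i ∈ s, c i = 0 := by
  have hinj : Injective fun i : s => powersHom K (v i) := fun i j hij =>
    Subtype.ext <| hv i.2 j.2 <| by simpa using DFunLike.congr_fun hij (Multiplicative.ofAdd 1)
  have hli := (linearIndependent_monoidHom (Multiplicative ℕ) K).comp _ hinj
  intro i hi
  refine Fintype.linearIndependent_iff.mp hli (fun i => c i) (funext fun n => ?_) ⟨i, hi⟩
  simpa [sum_attach s fun i => c i * v i ^ n.toAdd] using h n.toAdd

end Dedekind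

section RamanujanComponent

variable {K ι : Type*} [Field K]

noncomputable def ramanujanComponent (n : ℕ) (a : K → K) (x : ℤ) : K :=
  ∑ ζ ∈ primitiveRoots n K, a ζ * ζ ^ x

theorem ne_zero_of_mem_primitiveRoots {n : ℕ} {ζ : K} (h : ζ ∈ primitiveRoots n K) : ζ ≠ 0 := by
  have hn : n ≠ 0 := by rintro rfl; simp at h
  exact (isPrimitiveRoot_of_mem_primitiveRoots h).ne_zero hn

@[simp]
theorem ramanujanComponent_zero (a : K → K) : ramanujanComponent 0 a = 0 := by
  ext x; simp [ramanujanComponent]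

theorem exists_ne_zero_of_ramanujanComponent_ne_zero {n : ℕ} {a : K → K}
    (h : ramanujanComponent n a ≠ 0) : ∃ ζ ∈ primitiveRoots n K, a ζ ≠ 0 := by
  obtain ⟨x, hx⟩ := Function.ne_iff.mp h
  obtain ⟨ζ, hζ, hne⟩ := exists_ne_zero_of_sum_ne_zero hx
  exact ⟨ζ, hζ, left_ne_zero_of_mul hne⟩

theorem ramanujanComponent_add_sub (n : ℕ) (a : K → K) (x y : ℤ) :
    ramanujanComponent n a (x + y) - ramanujanComponent n a x =
      ramanujanComponent n (fun ζ => a ζ * (ζ ^ y - 1)) x := by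
  simp only [ramanujanComponent, ← sum_sub_distrib]
  refine sum_congr rfl fun ζ hζ => ?_
  rw [zpow_add₀ (ne_zero_of_mem_primitiveRoots hζ)]
  ring

theorem ramanujanComponent_periodic_of_dvd {n T : ℕ} (a : K → K) (h : n ∣ T) :
    Periodic (ramanujanComponent n a) T := fun x => by
  rw [← sub_eq_zero, ramanujanComponent_add_sub]
  refine sum_eq_zero fun ζ hζ => ?_
  have hζT : ζ ^ T = 1 := (isPrimitiveRoot_of_mem_primitiveRoots hζ).pow_eq_one_iff_dvd T |>.mpr h
  simp [hζT]

variable {s : Finset ι} {ω : ι → ℕ} {a : ι → K → K}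

theorem eq_zero_of_sum_ramanujanComponent_eq_zero (hω : Set.InjOn ω s)
    (h : ∑ j ∈ s, ramanujanComponent (ω j) (a j) = 0) :
    ∀ j ∈ s, ∀ ζ ∈ primitiveRoots (ω j) K, a j ζ = 0 := by
  have hv : Set.InjOn Sigma.snd (s.sigma fun j => primitiveRoots (ω j) K : Set (Σ _ : ι, K)) := by
    rintro ⟨j, ζ⟩ hjζ ⟨k, η⟩ hkη (rfl : ζ = η)
    simp only [coe_sigma, Set.mem_sigma_iff, mem_coe] at hjζ hkη
    obtain rfl : j = k := hω hjζ.1 hkη.1 <| not_imp_comm.mp IsPrimitiveRoot.disjoint <|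
      not_disjoint_iff.mpr ⟨ζ, hjζ.2, hkη.2⟩
    rfl
  have hcoeff := eq_zero_of_forall_sum_mul_pow_eq_zero_s18 hv (c := fun p => a p.1 p.2) fun n => by
    simpa [sum_sigma, ramanujanComponent] using congrFun h n
  exact fun j hj ζ hζ => hcoeff ⟨j, ζ⟩ (mem_sigma.mpr ⟨hj, hζ⟩)

theorem dvd_of_periodic_sum_ramanujanComponent (hω : Set.InjOn ω s) {T : ℕ}
    (hT : Periodic (∑ j ∈ s, ramanujanComponent (ω j) (a j)) T) {j : ι} (hj : j ∈ s)
    (hne : ramanujanComponent (ω j) (a j) ≠ 0) : ω j ∣ T := by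
  have hcoeff := eq_zero_of_sum_ramanujanComponent_eq_zero hω <| funext fun x => by
    simpa [← sum_sub_distrib, ramanujanComponent_add_sub] using sub_eq_zero.mpr (hT x)
  obtain ⟨ζ, hζ, haζ⟩ := exists_ne_zero_of_ramanujanComponent_ne_zero hne
  have hζT : ζ ^ T = 1 := by
    simpa [haζ, sub_eq_zero] using hcoeff j hj ζ hζ
  exact (isPrimitiveRoot_of_mem_primitiveRoots hζ).pow_eq_one_iff_dvd T |>.mp hζT

theorem periodic_sum_ramanujanComponent_iff (hω : Set.InjOn ω s)
    (hne : ∀ j ∈ s, ramanujanComponent (ω j) (a j) ≠ 0) {T : ℕ} :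
    Periodic (∑ j ∈ s, ramanujanComponent (ω j) (a j)) T ↔ ∀ j ∈ s, ω j ∣ T :=
  ⟨fun hT j hj => dvd_of_periodic_sum_ramanujanComponent hω hT hj (hne j hj), fun h =>
    s.periodic_sum fun j hj => ramanujanComponent_periodic_of_dvd (a j) (h j hj)⟩

end RamanujanComponent

theorem fundamental_period_of_sum_of_ramanujan_components_general (m : ℕ)
    (ω : Fin m → ℕ) (hinj : Function.Injective ω)
    (g : Fin m → ℂ → ℂ)
    (fcomp : Fin m → ℤ → ℂ)
    (hfcomp : ∀ j, ∀ x : ℤ, fcomp j x = ∑ ζ ∈ primitiveRoots (ω j) ℂ, g j ζ * ζ ^ x)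
    (hne : ∀ j, ∃ x : ℤ, fcomp j x ≠ 0)
    (f : ℤ → ℂ) (hf : ∀ x : ℤ, f x = ∑ j, fcomp j x) :
    IsLeast {T : ℕ | 0 < T ∧ ∀ x : ℤ, f (x + T) = f x} (Finset.univ.lcm ω) := by
  obtain rfl : fcomp = fun j => ramanujanComponent (ω j) (g j) := funext₂ hfcomp
  obtain rfl : f = ∑ j, ramanujanComponent (ω j) (g j) :=
    funext fun x => (hf x).trans (Finset.sum_apply x _ _).symm
  have hcomp (j : Fin m) : ramanujanComponent (ω j) (g j) ≠ 0 := Function.ne_iff.mpr (hne j)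
  have hperiod (T : ℕ) : Periodic (∑ j, ramanujanComponent (ω j) (g j)) T ↔ univ.lcm ω ∣ T :=
    (periodic_sum_ramanujanComponent_iff hinj.injOn fun j _ => hcomp j).trans lcm_dvd_iff.symm
  have hpos : 0 < univ.lcm ω := by
    refine Nat.pos_of_ne_zero fun h => ?_
    obtain ⟨j, -, hj⟩ := lcm_eq_zero_iff.mp h
    exact hcomp j (hj ▸ ramanujanComponent_zero (g j))
  exact ⟨⟨hpos, (hperiod _).mpr dvd_rfl⟩,
    fun T ⟨hT, hTper⟩ => Nat.le_of_dvd hT ((hperiod T).mp hTper)⟩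

theorem fundamental_period_of_sum_of_ramanujan_components (m : ℕ)
    (ω : Fin m → ℕ) (hω : ∀ j, 1 ≤ ω j) (hinj : Function.Injective ω)
    (g : Fin m → ℂ → ℂ)
    (fcomp : Fin m → ℤ → ℂ)
    (hfcomp : ∀ j, ∀ x : ℤ, fcomp j x = ∑ ζ ∈ primitiveRoots (ω j) ℂ, g j ζ * ζ ^ x)
    (hne : ∀ j, ∃ x : ℤ, fcomp j x ≠ 0)
    (f : ℤ → ℂ) (hf : ∀ x : ℤ, f x = ∑ j, fcomp j x) :
    IsLeast {T : ℕ | 0 < T ∧ ∀ x : ℤ, f (x + T) = f x} (Finset.univ.lcm ω) :=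
  fundamental_period_of_sum_of_ramanujan_components_general m ω hinj g fcomp hfcomp hne f hf
end
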